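/- arXiv:0808.1298 — 2 statements merged into one kernel-verified Lean document; each statement's English description precedes it below -/
import Mathlib

section
/- Let (X,τ), (Y,τ'), (Z,τ'') be compact Hausdorff spaces, d₀ a semi metric on X whose induced topology is weaker than τ, F : Y × Z → X continuous, and d₁(z,z') = sup{ d₀(F(y,z), F(y,z')) : y ∈ Y }. For states μ on C(Y,ℂ) and ν on C(Z,ℂ), define the product functional (μ⊗ν) on C(Y×Z,ℂ) by (μ⊗ν)(g) = μ(y ↦ ν(g(y,·))), and define the semi metric d on S(C(Z,ℂ)) by d(ν,ν') = sup over μ ∈ S(C(Y,ℂ)) of ρ_L(a ↦ (μ⊗ν)(a∘F), a ↦ (μ⊗ν')(a∘F)), where ρ_L(φ,ψ) = sup{ |φ(a) − ψ(a)| : a ∈ C(X,ℂ), |a(p) − a(q)| ≤ d₀(p,q) for all p,q ∈ X }. Let N(c) = sup{ |ν(c) − ν'(c)|/d(ν,ν') : ν,ν' ∈ S(C(Z,ℂ)), d(ν,ν') ≠ 0 }, 𝒞 = { c ∈ C(Z,ℂ) : ν ↦ ν(c) is d-continuous and N(c) < ∞ }, and ρ_N(ν,ν') = sup{ |ν(c)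 − ν'(c)| : c ∈ 𝒞, N(c) ≤ 1 }. Then for all z, z' ∈ Z: d₁(z,z') = ρ_N(δ_z, δ_{z'}), where δ_z is the evaluation state on C(Z,ℂ). -/
/-!
A state has norm at most one, so `d(δ_z, δ_z') ≤ d₁(z, z')`. Every `d`-continuous `c` with `N c ≤ 1`
satisfies `|ν c - ν' c| ≤ d(ν, ν')` for all states (continuity handles the case `d(ν, ν') = 0`),
hence `ρ_N ≤ d` on states. Conversely, taking `μ = δ_y` in the definition of `d` shows that the
distance profile `w ↦ d₀(F(y, z), F(y, w))`, i.e. `(a ∘ F)(y, ·)` for the `d₀`-Lipschitz function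
`a = d₀(F(y, z), ·)`, satisfies the same estimate; it separates `δ_z` from `δ_z'` by
`d₀(F(y, z), F(y, z'))`.
-/

open scoped ENNReal

noncomputable section

variable {X Y Z : Type*} [TopologicalSpace X] [CompactSpace X] [T2Space X]
  [TopologicalSpace Y] [CompactSpace Y] [T2Space Y]
  [TopologicalSpace Z] [CompactSpace Z] [T2Space Z]

/-- A state on the C*-algebra `C(W, ℂ)` of continuous functions on a compact Hausdorff
space `W`: a continuous linear functional sending the unit to `1` and taking nonnegative real
values on positive elements `star a * a`. -/
def IsState {W : Type*} [TopologicalSpace W] [CompactSpace W] (φ : C(W, ℂ) →L[ℂ] ℂ) : Prop :=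
  φ 1 = 1 ∧ ∀ a : C(W, ℂ), 0 ≤ (φ (star a * a)).re ∧ (φ (star a * a)).im = 0

/-- The product functional `(μ ⊗ ν)(g) = μ (y ↦ ν (g (y, ·)))` on `C(Y × Z, ℂ)`, realizing
the identification `C(Y × Z, ℂ) ≅ C(Y, ℂ) ⊗ C(Z, ℂ)`. -/
def tensorApply (μ : C(Y, ℂ) →L[ℂ] ℂ) (ν : C(Z, ℂ) →L[ℂ] ℂ) (g : C(Y × Z, ℂ)) : ℂ :=
  μ ⟨fun y => ν (g.curry y), ν.continuous.comp g.curry.continuous⟩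

/-- The semi metric `d` on the state space of `C(Z, ℂ)` induced by the quantum family
`a ↦ a ∘ F` and the Monge–Kantorovich metric of `d₀`:
`d(ν, ν') = sup_μ sup { |(μ⊗ν)(a∘F) - (μ⊗ν')(a∘F)| : a 1-Lipschitz for d₀ }`. -/
def dTensor (d₀ : X → X → ℝ) (F : C(Y × Z, X)) (ν ν' : C(Z, ℂ) →L[ℂ] ℂ) : ℝ≥0∞ :=
  ⨆ μ : {φ : C(Y, ℂ) →L[ℂ] ℂ // IsState φ},
    ⨆ a ∈ {a : C(X, ℂ) | ∀ p q : X, ‖a p - a q‖ ≤ d₀ p q},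
      (‖tensorApply μ.1 ν (a.comp F) - tensorApply μ.1 ν' (a.comp F)‖₊ : ℝ≥0∞)

/-- The Lipschitz-type seminorm `N = L_d` on `C(Z, ℂ)` induced by the semi metric `dTensor`
on the state space: `N(c) = sup { |ν c - ν' c| / d(ν, ν') : ν, ν' states, d(ν, ν') ≠ 0 }`. -/
def NSem (d₀ : X → X → ℝ) (F : C(Y × Z, X)) (c : C(Z, ℂ)) : ℝ≥0∞ :=
  ⨆ (ν : {φ : C(Z, ℂ) →L[ℂ] ℂ // IsState φ}) (ν' : {φ : C(Z, ℂ) →L[ℂ] ℂ // IsState φ})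
    (_ : dTensor d₀ F ν.1 ν'.1 ≠ 0), (‖ν.1 c - ν'.1 c‖₊ : ℝ≥0∞) / dTensor d₀ F ν.1 ν'.1

/-- Continuity of the evaluation map `ν ↦ ν c` on the state space of `C(Z, ℂ)` with respect
to the semi metric `dTensor`. -/
def DCont (d₀ : X → X → ℝ) (F : C(Y × Z, X)) (c : C(Z, ℂ)) : Prop :=
  ∀ ν : {φ : C(Z, ℂ) →L[ℂ] ℂ // IsState φ}, ∀ ε : ℝ, 0 < ε → ∃ δ : ℝ, 0 < δ ∧
    ∀ ν' : {φ : C(Z, ℂ) →L[ℂ] ℂ // IsState φ},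
      dTensor d₀ F ν'.1 ν.1 < ENNReal.ofReal δ → ‖ν'.1 c - ν.1 c‖ < ε

/-- The semi metric `ρ_N` on the state space of `C(Z, ℂ)`:
`ρ_N(ν, ν') = sup { |ν c - ν' c| : c ∈ 𝒞, N c ≤ 1 }`, where
`𝒞 = { c : ν ↦ ν c is d-continuous and N c < ∞ }`. -/
def rhoN (d₀ : X → X → ℝ) (F : C(Y × Z, X)) (ν ν' : C(Z, ℂ) →L[ℂ] ℂ) : ℝ≥0∞ :=
  ⨆ c ∈ {c : C(Z, ℂ) | DCont d₀ F c ∧ NSem d₀ F c ≤ 1}, (‖ν c - ν' c‖₊ : ℝ≥0∞)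

/-- The point-evaluation (Dirac) state `δ_z : c ↦ c z` on `C(Z, ℂ)`. -/
def delta (z : Z) : C(Z, ℂ) →L[ℂ] ℂ :=
  ContinuousMap.evalCLM ℂ z

open scoped ComplexOrder

namespace IsState

variable {W : Type*} [TopologicalSpace W] [CompactSpace W] {φ : C(W, ℂ) →L[ℂ] ℂ}

lemma map_nonneg (hφ : IsState φ) {a : C(W, ℂ)} (ha : 0 ≤ a) : 0 ≤ φ a := by
  obtain ⟨s, rfl⟩ := CStarAlgebra.nonneg_iff_eq_star_mul_self.mp ha
  exact Complex.nonneg_iff.mpr ⟨(hφ.2 s).1, (hφ.2 s).2.symm⟩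

lemma apply_le_norm_of_isSelfAdjoint (hφ : IsState φ) {a : C(W, ℂ)} (ha : IsSelfAdjoint a) :
    φ a ≤ ‖a‖ := by
  have := hφ.map_nonneg (sub_nonneg.mpr ha.le_algebraMap_norm_self)
  rwa [map_sub, Algebra.algebraMap_eq_smul_one, ← Complex.coe_smul, map_smul, hφ.1, smul_eq_mul,
    mul_one, sub_nonneg] at this

lemma im_apply_eq_zero_of_isSelfAdjoint (hφ : IsState φ) {a : C(W, ℂ)} (ha : IsSelfAdjoint a) :
    (φ a).im = 0 :=
  (Complex.le_def.mp (hφ.apply_le_norm_of_isSelfAdjoint ha)).2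

/- Rotate `a` so that `φ` takes a nonnegative value on it; that value is then `φ` of the real
part, which is at most its norm. -/
lemma norm_apply_le (hφ : IsState φ) (a : C(W, ℂ)) : ‖φ a‖ ≤ ‖a‖ := by
  obtain ⟨b, hb, hφb⟩ : ∃ b : C(W, ℂ), ‖b‖ = ‖a‖ ∧ φ b = ‖φ a‖ := by
    rcases eq_or_ne (φ a) 0 with h0 | h0
    · exact ⟨a, rfl, by simp [h0]⟩
    · refine ⟨(‖φ a‖ / φ a) • a, by simp [norm_smul, h0], ?_⟩
      rw [map_smul, smul_eq_mul, div_mul_cancel₀ _ h0]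
  have hsplit : φ b = φ (realPart b) + Complex.I * φ (imaginaryPart b) := by
    conv_lhs => rw [← realPart_add_I_smul_imaginaryPart b]
    rw [map_add, map_smul, smul_eq_mul]
  have him := hφ.im_apply_eq_zero_of_isSelfAdjoint (imaginaryPart b).2
  calc ‖φ a‖ = (φ (realPart b)).re := by
        simpa [him] using congrArg Complex.re (hφb.symm.trans hsplit)
    _ ≤ ‖(realPart b : C(W, ℂ))‖ :=
        (Complex.le_def.mp (hφ.apply_le_norm_of_isSelfAdjoint (realPart b).2)).1
    _ ≤ ‖a‖ := hb ▸ realPart.norm_le b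

end IsState

lemma isState_delta {W : Type*} [TopologicalSpace W] [CompactSpace W] (w : W) :
    IsState (delta w) :=
  ⟨rfl, fun a => by
    obtain ⟨hre, him⟩ := Complex.nonneg_iff.mp (ContinuousMap.le_def.mp (star_mul_self_nonneg a) w)
    exact ⟨hre, him.symm⟩⟩

section Semimetric

variable {V : Type*} {d : V → V → ℝ}

lemma abs_sub_le_of_triangle (hsymm : ∀ x y, d x y = d y x)
    (htri : ∀ x y z, d x z ≤ d x y + d y z) (x p q : V) : |d x p - d x q| ≤ d p q := by
  have := htri x p q
  have := htri x q p
  rw [hsymm q p] at this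
  rw [abs_le]
  constructor <;> linarith

lemma continuous_of_triangle [TopologicalSpace V] (hsymm : ∀ x y, d x y = d y x)
    (htri : ∀ x y z, d x z ≤ d x y + d y z)
    (hweaker : ∀ (x : V) (ε : ℝ), 0 < ε → ∃ U : Set V, IsOpen U ∧ x ∈ U ∧ ∀ y ∈ U, d x y < ε)
    (x : V) : Continuous (d x) := by
  refine continuous_iff_continuousAt.mpr fun q => Metric.tendsto_nhds.mpr fun ε hε => ?_
  obtain ⟨U, hUopen, hqU, hU⟩ := hweaker q ε hε
  filter_upwards [hUopen.mem_nhds hqU] with p hp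
  calc dist (d x p) (d x q) ≤ d p q := abs_sub_le_of_triangle hsymm htri x p q
    _ = d q p := hsymm p q
    _ < ε := hU p hp

end Semimetric

section QuantumFamily

variable {X Y Z : Type*} [TopologicalSpace X] [TopologicalSpace Y] [CompactSpace Y]
  [TopologicalSpace Z] (d₀ : X → X → ℝ) (F : C(Y × Z, X))

lemma nnnorm_curry_sub_le_dTensor {a : C(X, ℂ)} (ha : ∀ p q, ‖a p - a q‖ ≤ d₀ p q) (y : Y)
    (ν ν' : C(Z, ℂ) →L[ℂ] ℂ) :
    (‖ν ((a.comp F).curry y) - ν' ((a.comp F).curry y)‖₊ : ℝ≥0∞) ≤ dTensor d₀ F ν ν' :=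
  le_iSup_of_le (⟨delta y, isState_delta y⟩ : {φ : C(Y, ℂ) →L[ℂ] ℂ // IsState φ})
    (le_iSup₂_of_le a ha le_rfl)

lemma dTensor_delta_le (z z' : Z) :
    dTensor d₀ F (delta z) (delta z') ≤ ⨆ y : Y, ENNReal.ofReal (d₀ (F (y, z)) (F (y, z'))) := by
  set D := ⨆ y : Y, ENNReal.ofReal (d₀ (F (y, z)) (F (y, z')))
  rcases eq_or_ne D ⊤ with hD | hD
  · exact hD ▸ le_top
  refine iSup_le fun μ => iSup₂_le fun a ha => ?_
  let slice (w : Z) : C(Y, ℂ) := (a.comp F).comp (.prodMk (.id Y) (.const Y w))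
  have hdiff : tensorApply μ.1 (delta z) (a.comp F) - tensorApply μ.1 (delta z') (a.comp F) =
      μ.1 (slice z - slice z') := by
    rw [map_sub]; rfl
  have hslice : ‖slice z - slice z'‖ ≤ D.toReal :=
    (ContinuousMap.norm_le _ ENNReal.toReal_nonneg).mpr fun y =>
      (ha _ _).trans ((ENNReal.ofReal_le_iff_le_toReal hD).mp
        (le_iSup (fun y => ENNReal.ofReal (d₀ (F (y, z)) (F (y, z')))) y))
  rw [hdiff, ← enorm_eq_nnnorm, ← ofReal_norm, ← ENNReal.ofReal_toReal hD]
  exact ENNReal.ofReal_le_ofReal ((μ.2.norm_apply_le _).trans hslice)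

variable [CompactSpace Z]

variable {d₀ F} in
lemma dCont_and_nSem_le_one_iff {c : C(Z, ℂ)} :
    DCont d₀ F c ∧ NSem d₀ F c ≤ 1 ↔ ∀ ν ν' : {φ : C(Z, ℂ) →L[ℂ] ℂ // IsState φ},
      (‖ν.1 c - ν'.1 c‖₊ : ℝ≥0∞) ≤ dTensor d₀ F ν.1 ν'.1 := by
  constructor
  · rintro ⟨hcont, hN⟩ ν ν'
    rcases eq_or_ne (dTensor d₀ F ν.1 ν'.1) 0 with h0 | h0
    · -- `d`-continuity of `c` at `ν'` forces `ν c = ν' c`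
      rw [h0, nonpos_iff_eq_zero, ENNReal.coe_eq_zero, nnnorm_eq_zero, ← norm_le_zero_iff]
      refine le_of_forall_pos_le_add fun ε hε => ?_
      obtain ⟨δ, hδ, hνδ⟩ := hcont ν' ε hε
      simpa using (hνδ ν (h0 ▸ ENNReal.ofReal_pos.mpr hδ)).le
    · have : (‖ν.1 c - ν'.1 c‖₊ : ℝ≥0∞) / dTensor d₀ F ν.1 ν'.1 ≤ NSem d₀ F c :=
        le_iSup_of_le ν (le_iSup_of_le ν' (le_iSup_of_le h0 le_rfl))
      simpa using (ENNReal.div_le_iff_le_mul (Or.inl h0) (Or.inr one_ne_zero)).mp (this.trans hN)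
  · intro h
    refine ⟨fun ν ε hε => ⟨ε, hε, fun ν' hν' => ?_⟩, iSup₂_le fun ν ν' => iSup_le fun _ =>
      ENNReal.div_le_of_le_mul (by simpa using h ν ν')⟩
    have := (h ν' ν).trans_lt hν'
    rwa [← enorm_eq_nnnorm, ← ofReal_norm, ENNReal.ofReal_lt_ofReal_iff hε] at this

variable {d₀ F} in
lemma rhoN_le_dTensor {ν ν' : C(Z, ℂ) →L[ℂ] ℂ} (hν : IsState ν) (hν' : IsState ν') :
    rhoN d₀ F ν ν' ≤ dTensor d₀ F ν ν' :=
  iSup₂_le fun _ hc => dCont_and_nSem_le_one_iff.mp hc ⟨ν, hν⟩ ⟨ν', hν'⟩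

variable {d₀} in
lemma ofReal_le_rhoN_delta (d₀_refl : ∀ x, d₀ x x = 0) (d₀_symm : ∀ x y, d₀ x y = d₀ y x)
    (d₀_triangle : ∀ x y z, d₀ x z ≤ d₀ x y + d₀ y z)
    (hweaker : ∀ (x : X) (ε : ℝ), 0 < ε → ∃ U : Set X, IsOpen U ∧ x ∈ U ∧ ∀ y ∈ U, d₀ x y < ε)
    (y : Y) (z z' : Z) :
    ENNReal.ofReal (d₀ (F (y, z)) (F (y, z'))) ≤ rhoN d₀ F (delta z) (delta z') := by
  let a : C(X, ℂ) := ⟨fun x => (d₀ (F (y, z)) x : ℂ),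
    Complex.continuous_ofReal.comp (continuous_of_triangle d₀_symm d₀_triangle hweaker _)⟩
  have ha : ∀ p q, ‖a p - a q‖ ≤ d₀ p q := fun p q => by
    simpa [a, ← Complex.ofReal_sub] using abs_sub_le_of_triangle d₀_symm d₀_triangle _ p q
  refine le_iSup₂_of_le ((a.comp F).curry y)
    (dCont_and_nSem_le_one_iff.mpr fun ν ν' => nnnorm_curry_sub_le_dTensor d₀ F ha y ν.1 ν'.1) ?_
  rw [← enorm_eq_nnnorm, ← ofReal_norm]
  refine ENNReal.ofReal_le_ofReal ?_
  simpa [delta, a, d₀_refl] using le_abs_self (d₀ (F (y, z)) (F (y, z')))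

end QuantumFamily

theorem d1_eq_rhoN_delta_general (d₀ : X → X → ℝ)
    (d₀_refl : ∀ x, d₀ x x = 0)
    (d₀_symm : ∀ x y, d₀ x y = d₀ y x)
    (d₀_triangle : ∀ x y z, d₀ x z ≤ d₀ x y + d₀ y z)
    (hweaker : ∀ (x : X) (ε : ℝ), 0 < ε →
      ∃ U : Set X, IsOpen U ∧ x ∈ U ∧ ∀ y ∈ U, d₀ x y < ε)
    (F : C(Y × Z, X)) :
    ∀ z z' : Z,
      (⨆ y : Y, ENNReal.ofReal (d₀ (F (y, z)) (F (y, z')))) =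
        rhoN d₀ F (delta z) (delta z') := by
  intro z z'
  apply le_antisymm
  · exact iSup_le fun y => ofReal_le_rhoN_delta F d₀_refl d₀_symm d₀_triangle hweaker y z z'
  · exact (rhoN_le_dTensor (isState_delta z) (isState_delta z')).trans (dTensor_delta_le d₀ F z z')

/-- Theorem of Section 4 of the paper, part i.  Let `X, Y, Z` be compact
Hausdorff spaces, `d₀` a semi metric on `X` whose induced topology is weaker than the
topology of `X`, `F : Y × Z → X` continuous, and
`d₁(z, z') = sup_y d₀(F(y,z), F(y,z'))`.  Then for all `z, z' ∈ Z`,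
`d₁(z, z') = ρ_N(δ_z, δ_{z'})`. -/
theorem d1_eq_rhoN_delta (d₀ : X → X → ℝ)
    (d₀_nonneg : ∀ x y, 0 ≤ d₀ x y)
    (d₀_refl : ∀ x, d₀ x x = 0)
    (d₀_symm : ∀ x y, d₀ x y = d₀ y x)
    (d₀_triangle : ∀ x y z, d₀ x z ≤ d₀ x y + d₀ y z)
    (hweaker : ∀ (x : X) (ε : ℝ), 0 < ε →
      ∃ U : Set X, IsOpen U ∧ x ∈ U ∧ ∀ y ∈ U, d₀ x y < ε)
    (F : C(Y × Z, X)) :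
    ∀ z z' : Z,
      (⨆ y : Y, ENNReal.ofReal (d₀ (F (y, z)) (F (y, z')))) =
        rhoN d₀ F (delta z) (delta z') :=
  d1_eq_rhoN_delta_general d₀ d₀_refl d₀_symm d₀_triangle hweaker F

end
end

section
/- Let (X,τ), (Y,τ'), (Z,τ'') be compact Hausdorff spaces, d₀ a semi metric on X whose induced topology is weaker than τ, F : Y × Z → X continuous, and d₁(z,z') = sup{ d₀(F(y,z), F(y,z')) : y ∈ Y }. With d, N and 𝒞 defined as follows: (μ⊗ν)(g) = μ(y ↦ ν(g(y,·))) for g ∈ C(Y×Z,ℂ); d(ν,ν') = sup over μ ∈ S(C(Y,ℂ)) of sup{ |(μ⊗ν)(a∘F) − (μ⊗ν')(a∘F)| : a ∈ C(X,ℂ), |a(p) − a(q)| ≤ d₀(p,q) ∀ p,q }; N(c) = sup{ |ν(c) − ν'(c)|/d(ν,ν') : ν,ν' ∈ S(C(Z,ℂ)), d(ν,ν') ≠ 0 }; 𝒞 = { c ∈ C(Z,ℂ) : ν ↦ ν(c) is d-continuous and N(c) < ∞ }. Then every c ∈ 𝒞 satisfies |c(z) − c(z')| ≤ N(c)·d₁(z,z')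 for all z,z' ∈ Z; in particular 𝒞 ⊆ Lip(Z,d₁) and the Lipschitz seminorm satisfies ‖c‖_{d₁} ≤ N(c). -/
open scoped ENNReal

noncomputable section

variable {X Y Z : Type*} [TopologicalSpace X] [CompactSpace X] [T2Space X]
  [TopologicalSpace Y] [CompactSpace Y] [T2Space Y]
  [TopologicalSpace Z] [CompactSpace Z] [T2Space Z]

/-- The semi metric `d₁(z, z') = sup_y d₀(F(y,z), F(y,z'))` on `Z`, valued in `[0, ∞]`. -/
def d1 (d₀ : X → X → ℝ) (F : C(Y × Z, X)) (z z' : Z) : ℝ≥0∞ :=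
  ⨆ y : Y, ENNReal.ofReal (d₀ (F (y, z)) (F (y, z')))

/-! Point evaluations `δ_z` are states on `C(Z, ℂ)`. Since states on `C(Y, ℂ)` have norm one,
`(μ ⊗ δ_z)(a ∘ F) - (μ ⊗ δ_{z'})(a ∘ F) = μ (a ∘ F(·, z) - a ∘ F(·, z'))` is bounded by
`d₁(z, z')` for every `d₀`-Lipschitz `a`, so `d(δ_z, δ_{z'}) ≤ d₁(z, z')`, and the definition
of `N` gives `|c z - c z'| ≤ N(c) · d(δ_z, δ_{z'})`. When `d(δ_z, δ_{z'}) = 0` this is instead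
forced by the `d`-continuity of `ν ↦ ν c`. Finiteness of these distances, needed to divide by
them, comes from compactness: a semi metric whose balls are neighbourhoods is bounded on a
compact space. -/

open scoped ComplexOrder ComplexStarModule

namespace PositiveLinearMap

variable {A : Type*} [CStarAlgebra A] [PartialOrder A] [StarOrderedRing A]

lemma apply_le_norm_of_isSelfAdjoint (φ : A →ₚ[ℂ] ℂ) (hφ : φ 1 = 1) {x : A}
    (hx : IsSelfAdjoint x) : φ x ≤ ‖x‖ := by
  simpa [Algebra.algebraMap_eq_smul_one, hφ] using φ.apply_le_of_isSelfAdjoint x hx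

lemma norm_apply_le_of_map_one (φ : A →ₚ[ℂ] ℂ) (hφ : φ 1 = 1) (a : A) : ‖φ a‖ ≤ ‖a‖ := by
  -- rotate `a` so that `φ (u • a) = ‖φ a‖` is real; then only `ℜ (u • a)` contributes
  obtain ⟨u, hu, hua⟩ := Complex.exists_norm_eq_mul_self (φ a)
  set b := u • a
  have hre := Complex.le_def.mp (φ.apply_le_norm_of_isSelfAdjoint hφ (ℜ b).prop)
  have him := Complex.le_def.mp (φ.apply_le_norm_of_isSelfAdjoint hφ (ℑ b).prop)
  have hdecomp : (‖φ a‖ : ℂ) = φ (ℜ b) + Complex.I * φ (ℑ b) := by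
    calc (‖φ a‖ : ℂ) = φ b := by rw [hua, map_smul φ, smul_eq_mul]
      _ = φ (ℜ b + Complex.I • ℑ b) := by rw [realPart_add_I_smul_imaginaryPart]
      _ = φ (ℜ b) + Complex.I * φ (ℑ b) := by rw [map_add, map_smul φ, smul_eq_mul]
  calc ‖φ a‖ = (φ (ℜ b)).re := by simpa [him.2] using congrArg Complex.re hdecomp
    _ ≤ ‖(ℜ b : A)‖ := by simpa using hre.1
    _ ≤ ‖b‖ := realPart.norm_le b
    _ = ‖a‖ := by rw [norm_smul, hu, one_mul]

end PositiveLinearMap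

section State

variable {W : Type*} [TopologicalSpace W] [CompactSpace W]

def IsState.toPositiveLinearMap {φ : C(W, ℂ) →L[ℂ] ℂ} (hφ : IsState φ) : C(W, ℂ) →ₚ[ℂ] ℂ :=
  .mk₀ φ.toLinearMap fun x hx => by
    obtain ⟨b, rfl⟩ := CStarAlgebra.nonneg_iff_eq_star_mul_self.mp hx
    exact Complex.nonneg_iff.mpr ⟨(hφ.2 b).1, (hφ.2 b).2.symm⟩

lemma IsState.norm_apply_le_s18 {φ : C(W, ℂ) →L[ℂ] ℂ} (hφ : IsState φ) (g : C(W, ℂ)) :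
    ‖φ g‖ ≤ ‖g‖ :=
  hφ.toPositiveLinearMap.norm_apply_le_of_map_one hφ.1 g

lemma isState_evalCLM (w : W) : IsState (ContinuousMap.evalCLM ℂ w) :=
  ⟨rfl, fun a => by simp [← Complex.normSq_eq_conj_mul_self, Complex.normSq_nonneg]⟩

end State

lemma bddAbove_range_uncurry_of_compactSpace {M : Type*} [TopologicalSpace M] [CompactSpace M]
    (d : M → M → ℝ) (d_symm : ∀ x y, d x y = d y x)
    (d_triangle : ∀ x y z, d x z ≤ d x y + d y z)
    (hd : ∀ (x : M) (ε : ℝ), 0 < ε → ∃ U : Set M, IsOpen U ∧ x ∈ U ∧ ∀ y ∈ U, d x y < ε) :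
    BddAbove (Set.range (Function.uncurry d)) := by
  choose U hUopen hUmem hUlt using fun x => hd x 1 one_pos
  obtain ⟨s, hs⟩ := isCompact_univ.elim_finite_subcover U hUopen
    fun x _ => Set.mem_iUnion.2 ⟨x, hUmem x⟩
  obtain ⟨B, hB⟩ := ((s ×ˢ s).image (Function.uncurry d)).bddAbove
  refine ⟨2 + B, Set.forall_mem_range.2 fun ⟨p, q⟩ => ?_⟩
  obtain ⟨i, hi, hpi⟩ : ∃ i ∈ s, p ∈ U i := by simpa using hs (Set.mem_univ p)
  obtain ⟨j, hj, hqj⟩ : ∃ j ∈ s, q ∈ U j := by simpa using hs (Set.mem_univ q)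
  have hij : d i j ≤ B :=
    hB (Finset.mem_image.2 ⟨(i, j), Finset.mem_product.2 ⟨hi, hj⟩, rfl⟩)
  have hpi' : d p i < 1 := d_symm p i ▸ hUlt i p hpi
  show d p q ≤ 2 + B
  calc d p q ≤ d p i + (d i j + d j q) := by linarith [d_triangle p i q, d_triangle i j q]
    _ ≤ 2 + B := by linarith [hUlt j q hqj]

lemma exists_pos_forall_lt_of_nnnorm_sub_le_mul {S E : Type*} [SeminormedAddCommGroup E]
    (f : S → E) (e : S → S → ℝ≥0∞) {K : ℝ≥0∞} (hK : K ≠ ⊤)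
    (hf : ∀ s s', (‖f s - f s'‖₊ : ℝ≥0∞) ≤ K * e s s') (s : S) {ε : ℝ} (hε : 0 < ε) :
    ∃ δ : ℝ, 0 < δ ∧ ∀ s', e s' s < ENNReal.ofReal δ → ‖f s' - f s‖ < ε := by
  set k := K.toReal with hk
  have hk0 : 0 ≤ k := ENNReal.toReal_nonneg
  refine ⟨ε / (k + 1), by positivity, fun s' hs' => ?_⟩
  have hKδ : K * ENNReal.ofReal (ε / (k + 1)) < ENNReal.ofReal ε := by
    rw [← ENNReal.ofReal_toReal hK, ← hk, ← ENNReal.ofReal_mul hk0,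
      ENNReal.ofReal_lt_ofReal_iff hε, mul_div_assoc', div_lt_iff₀ (by positivity)]
    linarith
  have := ((hf s' s).trans (by gcongr)).trans_lt hKδ
  rw [← enorm_eq_nnnorm, ← ofReal_norm, ENNReal.ofReal_lt_ofReal_iff hε] at this
  exact this

omit [CompactSpace X] [T2Space X] [CompactSpace Y] [T2Space Y] [CompactSpace Z] [T2Space Z] in
lemma d1_ne_top {d₀ : X → X → ℝ} (hd₀ : BddAbove (Set.range (Function.uncurry d₀)))
    (F : C(Y × Z, X)) (z z' : Z) : d1 d₀ F z z' ≠ ⊤ := by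
  obtain ⟨B, hB⟩ := hd₀
  exact ne_top_of_le_ne_top ENNReal.ofReal_ne_top
    (iSup_le fun y => ENNReal.ofReal_le_ofReal (hB ⟨(_, _), rfl⟩))

omit [CompactSpace Y] [T2Space Y] [CompactSpace Z] [T2Space Z] in
lemma tensorApply_evalCLM (μ : C(Y, ℂ) →L[ℂ] ℂ) (z : Z) (g : C(Y × Z, ℂ)) :
    tensorApply μ (ContinuousMap.evalCLM ℂ z) g =
      μ (g.comp ((ContinuousMap.id Y).prodMk (.const Y z))) :=
  rfl

omit [CompactSpace X] [T2Space X] [T2Space Y] [CompactSpace Z] [T2Space Z] in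
lemma dTensor_evalCLM_le_d1 (d₀ : X → X → ℝ) (F : C(Y × Z, X)) {z z' : Z}
    (h : d1 d₀ F z z' ≠ ⊤) :
    dTensor d₀ F (ContinuousMap.evalCLM ℂ z) (ContinuousMap.evalCLM ℂ z') ≤ d1 d₀ F z z' := by
  refine iSup₂_le fun μ a => iSup_le fun ha => ?_
  rw [tensorApply_evalCLM, tensorApply_evalCLM, ← map_sub, ← ENNReal.ofReal_toReal h,
    ← enorm_eq_nnnorm, ← ofReal_norm]
  refine ENNReal.ofReal_le_ofReal ((μ.2.norm_apply_le_s18 _).trans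
    ((ContinuousMap.norm_le _ ENNReal.toReal_nonneg).2 fun y => (ha _ _).trans ?_))
  exact (ENNReal.ofReal_le_iff_le_toReal h).1
    (le_iSup (fun y => ENNReal.ofReal (d₀ (F (y, z)) (F (y, z')))) y)

omit [CompactSpace X] [T2Space X] [T2Space Y] [T2Space Z] in
lemma nnnorm_sub_le_NSem_mul_dTensor {d₀ : X → X → ℝ} {F : C(Y × Z, X)} {c : C(Z, ℂ)}
    (hc : DCont d₀ F c) (ν ν' : {φ : C(Z, ℂ) →L[ℂ] ℂ // IsState φ})
    (h : dTensor d₀ F ν.1 ν'.1 ≠ ⊤) :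
    (‖ν.1 c - ν'.1 c‖₊ : ℝ≥0∞) ≤ NSem d₀ F c * dTensor d₀ F ν.1 ν'.1 := by
  rcases eq_or_ne (dTensor d₀ F ν.1 ν'.1) 0 with h0 | h0
  · have : ν.1 c = ν'.1 c := eq_of_forall_dist_le fun ε hε => by
      obtain ⟨δ, hδ, hνν'⟩ := hc ν' ε hε
      exact (dist_eq_norm _ _).trans_le (hνν' ν (h0 ▸ ENNReal.ofReal_pos.2 hδ)).le
    simp [this]
  · exact (ENNReal.div_le_iff h0 h).1 (le_iSup₂_of_le ν ν' (le_iSup_of_le h0 le_rfl))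

theorem mem_C_lipschitz_general (d₀ : X → X → ℝ)
    (d₀_symm : ∀ x y, d₀ x y = d₀ y x)
    (d₀_triangle : ∀ x y z, d₀ x z ≤ d₀ x y + d₀ y z)
    (hweaker : ∀ (x : X) (ε : ℝ), 0 < ε →
      ∃ U : Set X, IsOpen U ∧ x ∈ U ∧ ∀ y ∈ U, d₀ x y < ε)
    (F : C(Y × Z, X)) :
    ∀ c : C(Z, ℂ), DCont d₀ F c → NSem d₀ F c ≠ ⊤ →
      (∀ z z' : Z, (‖c z - c z'‖₊ : ℝ≥0∞) ≤ NSem d₀ F c * d1 d₀ F z z') ∧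
      (⨆ (z : Z) (z' : Z) (_ : d1 d₀ F z z' ≠ 0),
          (‖c z - c z'‖₊ : ℝ≥0∞) / d1 d₀ F z z') ≤ NSem d₀ F c ∧
      (∀ (z : Z) (ε : ℝ), 0 < ε → ∃ δ : ℝ, 0 < δ ∧
        ∀ z' : Z, d1 d₀ F z' z < ENNReal.ofReal δ → ‖c z' - c z‖ < ε) := by
  intro c hc hN
  have hd1 : ∀ z z', d1 d₀ F z z' ≠ ⊤ :=
    d1_ne_top (bddAbove_range_uncurry_of_compactSpace d₀ d₀_symm d₀_triangle hweaker) F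
  have hlip (z z' : Z) : (‖c z - c z'‖₊ : ℝ≥0∞) ≤ NSem d₀ F c * d1 d₀ F z z' := by
    have hle := dTensor_evalCLM_le_d1 d₀ F (hd1 z z')
    exact (nnnorm_sub_le_NSem_mul_dTensor hc ⟨_, isState_evalCLM z⟩ ⟨_, isState_evalCLM z'⟩
      (ne_top_of_le_ne_top (hd1 z z') hle)).trans (by gcongr)
  exact ⟨hlip,
    iSup₂_le fun z z' => iSup_le fun h => (ENNReal.div_le_iff h (hd1 z z')).2 (hlip z z'),
    fun z ε hε => exists_pos_forall_lt_of_nnnorm_sub_le_mul c (d1 d₀ F) hN hlip z hε⟩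

/-- Theorem of Section 4 of the paper, parts ii and iii.  Let `X, Y, Z` be
compact Hausdorff spaces, `d₀` a semi metric on `X` whose induced topology is weaker than the
topology of `X`, `F : Y × Z → X` continuous, and `d₁(z, z') = sup_y d₀(F(y,z), F(y,z'))`.
Then every `c ∈ 𝒞` satisfies `|c z - c z'| ≤ N(c) · d₁(z, z')` for all `z, z'`; in
particular `c` is `d₁`-continuous with Lipschitz seminorm `‖c‖_{d₁} ≤ N(c)`, i.e.
`𝒞 ⊆ Lip(Z, d₁)` and `‖·‖_{d₁} ≤ N` on `𝒞`. -/
theorem mem_C_lipschitz (d₀ : X → X → ℝ)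
    (d₀_nonneg : ∀ x y, 0 ≤ d₀ x y)
    (d₀_refl : ∀ x, d₀ x x = 0)
    (d₀_symm : ∀ x y, d₀ x y = d₀ y x)
    (d₀_triangle : ∀ x y z, d₀ x z ≤ d₀ x y + d₀ y z)
    (hweaker : ∀ (x : X) (ε : ℝ), 0 < ε →
      ∃ U : Set X, IsOpen U ∧ x ∈ U ∧ ∀ y ∈ U, d₀ x y < ε)
    (F : C(Y × Z, X)) :
    ∀ c : C(Z, ℂ), DCont d₀ F c → NSem d₀ F c ≠ ⊤ →
      (∀ z z' : Z, (‖c z - c z'‖₊ : ℝ≥0∞) ≤ NSem d₀ F c * d1 d₀ F z z') ∧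
      (⨆ (z : Z) (z' : Z) (_ : d1 d₀ F z z' ≠ 0),
          (‖c z - c z'‖₊ : ℝ≥0∞) / d1 d₀ F z z') ≤ NSem d₀ F c ∧
      (∀ (z : Z) (ε : ℝ), 0 < ε → ∃ δ : ℝ, 0 < δ ∧
        ∀ z' : Z, d1 d₀ F z' z < ENNReal.ofReal δ → ‖c z' - c z‖ < ε) :=
  mem_C_lipschitz_general d₀ d₀_symm d₀_triangle hweaker F

end
end
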